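/- Type I Jacobi–Piñeiro orthogonality for general p ≥ 2: let α₁,…,α_p, β > -1 with α_i - α_j ∉ ℤ for i ≠ j, and n⃗ = (n₁,…,n_p) ∈ ℕ^p with |n⃗| = n₁+⋯+n_p. Define P^{(i)}(x) = (-1)^{|n⃗|-1} \frac{\prod_{k=1}^p (α_k+β+|n⃗|)_{n_k}}{(n_i-1)! \prod_{k≠i}(α_k-α_i)_{n_k}} \frac{Γ(α_i+β+|n⃗|)}{Γ(β+|n⃗|)Γ(α_i+1)}\, {}_{p+1}F_p(-n_i+1, α_i+β+|n⃗|, (α_i+1-α_k-n_k)_{k≠i}; α_i+1, (α_i+1-α_k)_{k≠i}; x). Then ∑_{i=1}^p ∫₀¹ x^j P^{(i)}(x) x^{α_i}(1-x)^β dx = 0 for j ∈ {0,…,|n⃗|-2} and = 1 for j = |n⃗|-1. -/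

import Mathlib

/-- Pochhammer symbol `(x)ₙ` on `ℝ`. -/
noncomputable def poch (x : ℝ) (n : ℕ) : ℝ := ∏ s ∈ Finset.range n, (x + s)

/-- The `i`-th type I Jacobi–Piñeiro polynomial for `p` weights. -/
noncomputable def JP (p : ℕ) (α : Fin p → ℝ) (β : ℝ) (n : Fin p → ℕ) (i : Fin p)
    (x : ℝ) : ℝ :=
  (-1) ^ ((∑ k, n k) - 1) *
    ((∏ k, poch (α k + β + (∑ k, n k : ℕ)) (n k)) /
      (((n i - 1).factorial : ℝ) *
        ∏ k ∈ Finset.univ.erase i, poch (α k - α i) (n k))) *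
    (Real.Gamma (α i + β + (∑ k, n k : ℕ)) /
      (Real.Gamma (β + (∑ k, n k : ℕ)) * Real.Gamma (α i + 1))) *
    ∑ l ∈ Finset.range (n i),
      poch (-(n i : ℝ) + 1) l * poch (α i + β + (∑ k, n k : ℕ)) l *
          (∏ k ∈ Finset.univ.erase i, poch (α i + 1 - α k - n k) l) /
          (poch (α i + 1) l *
            (∏ k ∈ Finset.univ.erase i, poch (α i + 1 - α k) l) * (l.factorial : ℝ)) *
        x ^ l

open Finset Polynomial MeasureTheory intervalIntegral

/-! ### Pochhammer lemmas -/

lemma poch_zero (x : ℝ) : poch x 0 = 1 := by simp [poch]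

lemma poch_succ (x : ℝ) (n : ℕ) : poch x (n+1) = poch x n * (x + n) := by
  simp [poch, Finset.prod_range_succ]

lemma poch_add (x : ℝ) (a b : ℕ) : poch x (a+b) = poch x a * poch (x+a) b := by
  simp only [poch, Finset.prod_range_add]
  congr 1
  exact Finset.prod_congr rfl (fun i _ => by push_cast; ring)

lemma poch_pos {x : ℝ} (hx : 0 < x) (n : ℕ) : 0 < poch x n :=
  Finset.prod_pos fun s _ => by positivity

lemma poch_reflect (x : ℝ) (n : ℕ) : poch (1 - x - n) n = (-1)^n * poch x n := by
  rw [poch, ← Finset.prod_range_reflect]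
  rw [show ((-1:ℝ))^n * poch x n = ∏ s ∈ Finset.range n, (-(x + s)) by
    simp only [poch]
    rw [show (∏ s ∈ Finset.range n, (-(x + (s:ℝ)))) = ∏ s ∈ Finset.range n, ((-1) * (x + s)) from
      Finset.prod_congr rfl fun s _ => by ring]
    rw [Finset.prod_mul_distrib, Finset.prod_const]
    simp [Finset.card_range]]
  refine Finset.prod_congr rfl fun s hs => ?_
  have hs' : s < n := Finset.mem_range.mp hs
  have h1 : n - 1 - s = n - (s+1) := by omega
  rw [h1, Nat.cast_sub (by omega : s + 1 ≤ n)]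
  push_cast; ring

lemma Gamma_add_nat {x : ℝ} (hx : 0 < x) (n : ℕ) :
    Real.Gamma (x + n) = poch x n * Real.Gamma x := by
  induction n with
  | zero => simp [poch_zero]
  | succ m ih =>
    have h2 : x + m > 0 := by positivity
    have : x + (m+1 : ℕ) = (x + m) + 1 := by push_cast; ring
    rw [this, Real.Gamma_add_one (ne_of_gt h2), ih, poch_succ]; ring

lemma poch_one_eq_factorial (n : ℕ) : poch 1 n = n.factorial := by
  induction n with
  | zero => simp [poch_zero]
  | succ m ih => rw [poch_succ, ih]; push_cast [Nat.factorial_succ]; ring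

lemma poch_neg_nat (m l : ℕ) : poch (-(m:ℝ)) l = (-1)^l * (m.descFactorial l : ℝ) := by
  induction l with
  | zero => simp [poch_zero]
  | succ r ih =>
    by_cases h : r ≤ m
    · rw [poch_succ, ih, Nat.descFactorial_succ]
      push_cast [Nat.cast_sub h]; ring
    · have h1 : m.descFactorial r = 0 := Nat.descFactorial_eq_zero_iff_lt.mpr (by omega)
      have h2 : m.descFactorial (r+1) = 0 := Nat.descFactorial_eq_zero_iff_lt.mpr (by omega)
      rw [poch_succ, ih, h1, h2]; simp

lemma poch_ne_zero_shift {y : ℝ} (h : ∀ z : ℤ, y ≠ z) (c : ℤ) (m : ℕ) :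
    poch (y + c) m ≠ 0 := by
  refine Finset.prod_ne_zero_iff.mpr fun s _ hzero => h (-c - s) ?_
  push_cast
  linarith [hzero]

lemma prod_desc (y : ℝ) (m : ℕ) : ∏ t ∈ Finset.range m, (y - t) = poch (y + 1 - m) m := by
  rw [poch, ← Finset.prod_range_reflect]
  refine Finset.prod_congr rfl fun s hs => ?_
  have hs' : s < m := Finset.mem_range.mp hs
  have h1 : m - 1 - s = m - (s+1) := by omega
  rw [h1, Nat.cast_sub (by omega : s + 1 ≤ m)]
  push_cast; ring

lemma L_R1 (d : ℝ) (l m : ℕ) :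
    (∏ t ∈ Finset.range m, (d + l - t)) * poch (d + 1 - m) l
      = (-1)^m * poch (-d) m * poch (d + 1) l := by
  have h0 : (∏ t ∈ Finset.range m, (d + l - t)) = poch (d + 1 - m + l) m := by
    rw [prod_desc]
    congr 1
    ring
  rw [h0]
  have h1 : poch (d+1-(m:ℝ)) (l+m) = poch (d+1-m) l * poch (d+1-m+l) m := poch_add _ _ _
  have h2 : poch (d+1-(m:ℝ)) (m+l) = poch (d+1-m) m * poch (d+1) l := by
    rw [poch_add]
    congr 2
    ring
  have h3 : poch (d+1-(m:ℝ)) m = (-1)^m * poch (-d) m := by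
    have := poch_reflect (-d) m
    rw [show (1:ℝ) - -d - m = d+1-m by ring] at this
    exact this
  calc poch (d + 1 - m + l) m * poch (d + 1 - m) l
      = poch (d+1-(m:ℝ)) (l+m) := by rw [h1]; ring
    _ = poch (d+1-(m:ℝ)) (m+l) := by rw [Nat.add_comm]
    _ = (-1)^m * poch (-d) m * poch (d + 1) l := by rw [h2, h3]

lemma prod_range_sub_self (l : ℕ) : ∏ t ∈ Finset.range l, ((l:ℝ) - t) = l.factorial := by
  rw [prod_desc, show (l:ℝ) + 1 - l = 1 by ring, poch_one_eq_factorial]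

lemma L_P1 (m l : ℕ) (hl : l < m) :
    ∏ t ∈ Finset.range m, (if t = l then 1 else ((l:ℝ) - t))
      = (-1)^(m-1-l) * (l.factorial : ℝ) * ((m-1-l).factorial : ℝ) := by
  obtain ⟨r, rfl⟩ : ∃ r, m = l + 1 + r := ⟨m - l - 1, by omega⟩
  rw [Finset.prod_range_add, Finset.prod_range_add]
  have e1 : ∏ t ∈ Finset.range l, (if t = l then 1 else ((l:ℝ) - t)) = l.factorial := by
    rw [← prod_range_sub_self l]
    exact Finset.prod_congr rfl fun t ht =>
      if_neg (by have := Finset.mem_range.mp ht; omega)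
  have e2 : ∏ x ∈ Finset.range 1, (if l + x = l then 1 else ((l:ℝ) - (l + x : ℕ))) = 1 := by
    simp
  have e3 : ∏ x ∈ Finset.range r, (if l + 1 + x = l then 1 else ((l:ℝ) - ((l + 1 + x : ℕ) : ℕ)))
      = (-1)^r * (r.factorial : ℝ) := by
    rw [show ((-1:ℝ))^r * (r.factorial : ℝ) = ∏ x ∈ Finset.range r, ((-1 : ℝ) * (1 + (x:ℝ))) by
      rw [Finset.prod_mul_distrib, Finset.prod_const, Finset.card_range]
      rw [show (∏ x ∈ Finset.range r, ((1:ℝ) + (x:ℝ))) = poch 1 r from rfl, poch_one_eq_factorial]]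
    refine Finset.prod_congr rfl fun x _ => ?_
    rw [if_neg (by omega)]
    push_cast; ring
  rw [e1, e2, e3, show l + 1 + r - 1 - l = r by omega]
  ring

/-! ### Lagrange -/

lemma lagrange_sum {ι : Type*} [Fintype ι] [DecidableEq ι] (v : ι → ℝ)
    (hv : Function.Injective v) (f : ℝ[X]) (hf : f.degree < Fintype.card ι) :
    ∑ i, f.eval (v i) / ∏ w ∈ Finset.univ.erase i, (v i - v w)
      = f.coeff (Fintype.card ι - 1) := by
  classical
  have hcard : (Finset.univ : Finset ι).card = Fintype.card ι := rfl
  have hinj : Set.InjOn v (Finset.univ : Finset ι) := fun a _ b _ h => hv h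
  have hf' : f.degree < ((Finset.univ : Finset ι).card : ℕ) := by rwa [hcard]
  have key := Lagrange.eq_interpolate hinj hf'
  have hco : f.coeff (Fintype.card ι - 1)
      = (Lagrange.interpolate Finset.univ v fun i => f.eval (v i)).coeff (Fintype.card ι - 1) := by
    rw [← key]
  rw [hco, Lagrange.interpolate_apply, Polynomial.finset_sum_coeff]
  refine Finset.sum_congr rfl fun i _ => ?_
  rw [Polynomial.coeff_C_mul]
  have hnat : (Lagrange.basis Finset.univ v i).natDegree = Fintype.card ι - 1 :=
    Lagrange.natDegree_basis hinj (Finset.mem_univ i)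
  have hbasis : (Lagrange.basis Finset.univ v i).coeff (Fintype.card ι - 1)
      = (∏ w ∈ Finset.univ.erase i, (v i - v w))⁻¹ := by
    have hlc : (Lagrange.basis Finset.univ v i).coeff (Fintype.card ι - 1)
        = (Lagrange.basis Finset.univ v i).leadingCoeff := by
      rw [Polynomial.leadingCoeff, hnat]
    rw [hlc, Lagrange.basis, Polynomial.leadingCoeff_prod, ← Finset.prod_inv_distrib]
    refine Finset.prod_congr rfl fun w hw => ?_
    have hne : v i ≠ v w := fun h => (Finset.mem_erase.mp hw).1 (hv h).symm
    rw [Lagrange.basisDivisor, Polynomial.leadingCoeff_mul, Polynomial.leadingCoeff_C,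
      Polynomial.leadingCoeff_X_sub_C]
    ring
  rw [hbasis, div_eq_mul_inv]

/-! ### Beta integral -/

lemma beta_ae (u v : ℝ) :
    ∀ x ∈ Set.Ioc (0:ℝ) 1,
      ((x:ℂ) ^ ((u:ℂ)-1) * (1-(x:ℂ)) ^ ((v:ℂ)-1)) = ((x ^ (u-1) * (1-x) ^ (v-1) : ℝ) : ℂ) := by
  intro x hx
  have hx0 : (0:ℝ) ≤ x := le_of_lt hx.1
  have hx1 : (0:ℝ) ≤ 1 - x := by linarith [hx.2]
  rw [Complex.ofReal_mul, Complex.ofReal_cpow hx0, Complex.ofReal_cpow hx1]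
  push_cast
  ring

lemma betaIntegrable {u v : ℝ} (hu : 0 < u) (hv : 0 < v) :
    IntervalIntegrable (fun x : ℝ => x ^ (u-1) * (1-x) ^ (v-1)) volume 0 1 := by
  have hc : IntervalIntegrable (fun x : ℝ => (x:ℂ) ^ ((u:ℂ)-1) * (1-(x:ℂ)) ^ ((v:ℂ)-1))
      volume 0 1 :=
    Complex.betaIntegral_convergent (u := u) (v := v) (by simpa using hu) (by simpa using hv)
  rw [intervalIntegrable_iff, Set.uIoc_of_le (by norm_num : (0:ℝ) ≤ 1)] at hc ⊢
  have hre : IntegrableOn (fun x : ℝ => ((x:ℂ) ^ ((u:ℂ)-1) * (1-(x:ℂ)) ^ ((v:ℂ)-1)).re)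
      (Set.Ioc (0:ℝ) 1) volume := hc.re
  refine hre.congr_fun ?_ measurableSet_Ioc
  intro x hx
  dsimp only
  rw [beta_ae u v x hx, Complex.ofReal_re]

lemma real_betaIntegral {u v : ℝ} (hu : 0 < u) (hv : 0 < v) :
    ∫ x in (0:ℝ)..1, x ^ (u-1) * (1-x) ^ (v-1) =
      Real.Gamma u * Real.Gamma v / Real.Gamma (u+v) := by
  have huv : Real.Gamma (u+v) ≠ 0 := ne_of_gt (Real.Gamma_pos_of_pos (by linarith))
  have key := Complex.Gamma_mul_Gamma_eq_betaIntegral (s := u) (t := v)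
    (by simpa using hu) (by simpa using hv)
  have hbeta : Complex.betaIntegral u v
      = ((∫ x in (0:ℝ)..1, x ^ (u-1) * (1-x) ^ (v-1) : ℝ) : ℂ) := by
    rw [Complex.betaIntegral, ← intervalIntegral.integral_ofReal]
    refine intervalIntegral.integral_congr_ae (Filter.Eventually.of_forall fun x hx => ?_)
    rw [Set.uIoc_of_le (by norm_num : (0:ℝ) ≤ 1)] at hx
    exact beta_ae u v x hx
  rw [hbeta, Complex.Gamma_ofReal, Complex.Gamma_ofReal,
    show ((u:ℂ) + v) = ((u + v : ℝ) : ℂ) by push_cast; ring, Complex.Gamma_ofReal] at key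
  have key2 : ((Real.Gamma u * Real.Gamma v : ℝ) : ℂ)
      = ((Real.Gamma (u+v) * ∫ x in (0:ℝ)..1, x ^ (u-1) * (1-x) ^ (v-1) : ℝ) : ℂ) := by
    push_cast
    convert key using 2
  have := Complex.ofReal_injective key2
  field_simp
  linarith [this]

lemma mono_integrable {a b : ℝ} (ha : -1 < a) (hb : -1 < b) (m : ℕ) :
    IntervalIntegrable (fun x : ℝ => x ^ m * (x ^ a * (1-x) ^ b)) volume 0 1 := by
  have h := betaIntegrable (u := a + m + 1) (v := b + 1)
    (by have : (0:ℝ) ≤ m := Nat.cast_nonneg m; linarith) (by linarith)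
  rw [intervalIntegrable_iff, Set.uIoc_of_le (by norm_num : (0:ℝ) ≤ 1)] at h ⊢
  refine h.congr_fun ?_ measurableSet_Ioc
  intro x hx
  dsimp only
  have hx0 : 0 < x := hx.1
  rw [show a+(m:ℝ)+1-1 = a + m by ring, show b+1-1 = b by ring,
    Real.rpow_add hx0, Real.rpow_natCast]
  ring

lemma mono_integral {a b : ℝ} (ha : -1 < a) (hb : -1 < b) (m : ℕ) :
    ∫ x in (0:ℝ)..1, x ^ m * (x ^ a * (1-x) ^ b)
      = Real.Gamma (a + m + 1) * Real.Gamma (b + 1) / Real.Gamma (a + m + b + 2) := by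
  have hu : (0:ℝ) < a + m + 1 := by have : (0:ℝ) ≤ m := Nat.cast_nonneg m; linarith
  have hv : (0:ℝ) < b + 1 := by linarith
  have h := real_betaIntegral hu hv
  rw [show a + (m:ℝ) + 1 + (b+1) = a + m + b + 2 by ring] at h
  rw [← h]
  refine intervalIntegral.integral_congr_ae (Filter.Eventually.of_forall fun x hx => ?_)
  rw [Set.uIoc_of_le (by norm_num : (0:ℝ) ≤ 1)] at hx
  have hx0 : 0 < x := hx.1
  rw [show a+(m:ℝ)+1-1 = a + m by ring, show b+1-1 = b by ring,
    Real.rpow_add hx0, Real.rpow_natCast]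
  ring

/-! ### index infrastructure -/

section infra
variable {ι : Type*} [Fintype ι] [DecidableEq ι]

lemma prod_erase_eq_prod_ite (F : ι → ℝ) (a : ι) :
    ∏ w ∈ Finset.univ.erase a, F w = ∏ w, (if w = a then 1 else F w) := by
  rw [← Finset.mul_prod_erase Finset.univ _ (Finset.mem_univ a)]
  simp only [eq_self_iff_true, if_true, one_mul]
  exact (Finset.prod_congr rfl fun w hw => if_neg (Finset.mem_erase.mp hw).1).symm

lemma erase_inl_prod {σ : Type*} [Fintype σ] [DecidableEq σ] (F : σ ⊕ Unit → ℝ) (u0 : σ) :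
    ∏ w ∈ Finset.univ.erase (Sum.inl u0), F w
      = (∏ w ∈ Finset.univ.erase u0, F (Sum.inl w)) * F (Sum.inr ()) := by
  rw [prod_erase_eq_prod_ite, Fintype.prod_sum_type, prod_erase_eq_prod_ite]
  simp

lemma erase_inr_prod {σ : Type*} [Fintype σ] [DecidableEq σ] (F : σ ⊕ Unit → ℝ) :
    ∏ w ∈ Finset.univ.erase (Sum.inr ()), F w = ∏ w : σ, F (Sum.inl w) := by
  rw [prod_erase_eq_prod_ite, Fintype.prod_sum_type]
  simp

lemma erase_sigma_prod {p : ℕ} (n : Fin p → ℕ) (F : (Σ k : Fin p, Fin (n k)) → ℝ)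
    (i : Fin p) (l : Fin (n i)) :
    ∏ w ∈ Finset.univ.erase (⟨i, l⟩ : Σ k : Fin p, Fin (n k)), F w
      = (∏ t ∈ Finset.univ.erase l, F ⟨i, t⟩) *
          ∏ k ∈ Finset.univ.erase i, ∏ t : Fin (n k), F ⟨k, t⟩ := by
  rw [prod_erase_eq_prod_ite]
  rw [show (Finset.univ : Finset (Σ k : Fin p, Fin (n k)))
      = Finset.univ.sigma (fun _ => Finset.univ) from (Finset.univ_sigma_univ).symm,
    Finset.prod_sigma]
  rw [← Finset.mul_prod_erase Finset.univ _ (Finset.mem_univ i)]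
  congr 1
  · rw [prod_erase_eq_prod_ite]
    refine Finset.prod_congr rfl fun t _ => ?_
    congr 1
    simp [Sigma.mk.inj_iff]
  · refine Finset.prod_congr rfl fun k hk => Finset.prod_congr rfl fun t _ => ?_
    rw [if_neg]
    simp only [Sigma.mk.inj_iff]
    rintro ⟨h1, -⟩
    exact (Finset.mem_erase.mp hk).1 h1
end infra

/-! ### coefficients -/

noncomputable def Acoef (p : ℕ) (α : Fin p → ℝ) (β : ℝ) (n : Fin p → ℕ) (i : Fin p) : ℝ :=
  (-1) ^ ((∑ k, n k) - 1) *
    ((∏ k, poch (α k + β + (∑ k, n k : ℕ)) (n k)) /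
      (((n i - 1).factorial : ℝ) *
        ∏ k ∈ Finset.univ.erase i, poch (α k - α i) (n k))) *
    (Real.Gamma (α i + β + (∑ k, n k : ℕ)) /
      (Real.Gamma (β + (∑ k, n k : ℕ)) * Real.Gamma (α i + 1)))

noncomputable def ccoef (p : ℕ) (α : Fin p → ℝ) (β : ℝ) (n : Fin p → ℕ) (i : Fin p)
    (l : ℕ) : ℝ :=
  poch (-(n i : ℝ) + 1) l * poch (α i + β + (∑ k, n k : ℕ)) l *
    (∏ k ∈ Finset.univ.erase i, poch (α i + 1 - α k - n k) l) /
    (poch (α i + 1) l *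
      (∏ k ∈ Finset.univ.erase i, poch (α i + 1 - α k) l) * (l.factorial : ℝ))

lemma JP_eq (p : ℕ) (α : Fin p → ℝ) (β : ℝ) (n : Fin p → ℕ) (i : Fin p) (x : ℝ) :
    JP p α β n i x = Acoef p α β n i * ∑ l ∈ Finset.range (n i), ccoef p α β n i l * x ^ l :=
  rfl

/-! ### the per-term identity -/

lemma endgame_id (s1 s2 s3 s4 K PK P1 P2 Lf Rf Df GA GB GC GD GE GF GG GH y : ℝ)
    (hsgn : s3 * s4 = s1 * s2) (hs12 : (s1*s2)*(s1*s2) = 1)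
    (hPK : PK ≠ 0) (hP1 : P1 ≠ 0) (hP2 : P2 ≠ 0) (hLf : Lf ≠ 0) (hRf : Rf ≠ 0) (hDf : Df ≠ 0)
    (hGA : GA ≠ 0) (hGB : GB ≠ 0) (hGC : GC ≠ 0) (hGD : GD ≠ 0) (hGE : GE ≠ 0) (hGH : GH ≠ 0)
    (hy : y ≠ 0) (hs1 : s1 ≠ 0) (hs2 : s2 ≠ 0) (hs3 : s3 ≠ 0) (hs4 : s4 ≠ 0) :
    s1 * (K / ((Df * Rf) * PK)) * (GA / (GB * GC)) *
      ((s2 * Df * (GD / GA) * P1) / ((GE / GC * P2) * Lf) * (GF * GG / GH))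
    = (GG * K) / GB * (GF / GE * (y * GD / GH) / (s3 * Lf * Rf * (s4 * (PK * P2) / P1) * y)) := by
  have hs3e : s3 = s1 * s2 / s4 := by rw [eq_div_iff hs4]; exact hsgn
  rw [hs3e]
  field_simp
  linear_combination
    (K * GF * GG) * hs12

lemma term_id (p : ℕ) (hp : 2 ≤ p) (α : Fin p → ℝ) (β : ℝ) (hα : ∀ k, -1 < α k) (hβ : -1 < β)
    (hZ : ∀ k k', k ≠ k' → ∀ z : ℤ, α k - α k' ≠ (z : ℝ))
    (n : Fin p → ℕ) (hn : ∀ k, 1 ≤ n k) (j : ℕ) (hj : j + 1 ≤ ∑ k, n k)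
    (i : Fin p) (t : Fin (n i)) :
    Acoef p α β n i * (ccoef p α β n i ↑t *
        (Real.Gamma (α i + j + ↑↑t + 1) * Real.Gamma (β + 1) /
          Real.Gamma (α i + j + ↑↑t + β + 2)))
      = (Real.Gamma (β + 1) * (∏ k, poch (α k + β + ((∑ k, n k : ℕ) : ℝ)) (n k)) /
          Real.Gamma (β + ((∑ k, n k : ℕ) : ℝ)))
        * (poch (α i + ↑↑t + 1) j * poch (α i + ↑↑t + β + j + 2) ((∑ k, n k) - 1 - j) /
           ((∏ s ∈ Finset.univ.erase t, (α i + ↑↑t - (α i + ↑↑s)))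
            * (∏ k ∈ Finset.univ.erase i, ∏ s : Fin (n k), (α i + ↑↑t - (α k + ↑↑s)))
            * (α i + ↑↑t - -(β + ((∑ k, n k : ℕ) : ℝ))))) := by
  classical
  unfold Acoef ccoef
  set N : ℕ := ∑ k, n k with hN
  have hNp : (p : ℕ) ≤ N := by
    calc (p:ℕ) = ∑ _k : Fin p, 1 := by simp
    _ ≤ N := Finset.sum_le_sum fun k _ => hn k
  have hN2 : 2 ≤ N := le_trans hp hNp
  have hl : (t : ℕ) < n i := t.isLt
  have hl1 : (t : ℕ) ≤ n i - 1 := by omega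
  have hNR : (2:ℝ) ≤ (N:ℝ) := by exact_mod_cast hN2
  have htR : (0:ℝ) ≤ ((t:ℕ):ℝ) := Nat.cast_nonneg _
  have hjR : (0:ℝ) ≤ (j:ℝ) := Nat.cast_nonneg _
  have hαi := hα i
  -- Gamma positivity
  have hG2 : 0 < Real.Gamma (β + ↑N) := Real.Gamma_pos_of_pos (by linarith)
  have hG3 : 0 < Real.Gamma (α i + 1) := Real.Gamma_pos_of_pos (by linarith)
  have hG1 : 0 < Real.Gamma (α i + β + ↑N) := Real.Gamma_pos_of_pos (by linarith)
  have hG6 : 0 < Real.Gamma (α i + ↑↑t + 1) := Real.Gamma_pos_of_pos (by linarith)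
  have hG8 : 0 < Real.Gamma (α i + ↑j + ↑↑t + β + 2) := Real.Gamma_pos_of_pos (by linarith)
  have hG4 : 0 < Real.Gamma (β + 1) := Real.Gamma_pos_of_pos (by linarith)
  have hG5 : 0 < Real.Gamma (α i + ↑↑t + β + ↑N) := Real.Gamma_pos_of_pos (by linarith)
  have hG7 : 0 < Real.Gamma (α i + ↑j + ↑↑t + 1) := Real.Gamma_pos_of_pos (by linarith)
  have hyne : (0:ℝ) < α i + ↑↑t + β + ↑N := by linarith
  -- factorial casts
  have hFc : ((n i - 1).factorial : ℝ) ≠ 0 := Nat.cast_ne_zero.mpr (Nat.factorial_ne_zero _)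
  have hLf : (((t:ℕ)).factorial : ℝ) ≠ 0 := Nat.cast_ne_zero.mpr (Nat.factorial_ne_zero _)
  have hRf : ((n i - 1 - (t:ℕ)).factorial : ℝ) ≠ 0 := Nat.cast_ne_zero.mpr (Nat.factorial_ne_zero _)
  have hDf : (((n i - 1).descFactorial (t:ℕ)) : ℝ) ≠ 0 := by
    rw [Nat.cast_ne_zero]
    intro hc
    exact absurd (Nat.descFactorial_eq_zero_iff_lt.mp hc) (by omega)
  have hfacmul : (((n i - 1).descFactorial (t:ℕ)) : ℝ) * ((n i - 1 - (t:ℕ)).factorial : ℝ)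
      = ((n i - 1).factorial : ℝ) := by
    rw [← Nat.cast_mul]
    norm_cast
    rw [Nat.mul_comm]
    exact Nat.factorial_mul_descFactorial hl1
  -- non-integrality nonvanishing
  have hPKne : (∏ k ∈ Finset.univ.erase i, poch (α k - α i) (n k)) ≠ 0 := by
    refine Finset.prod_ne_zero_iff.mpr fun k hk => ?_
    have hki : k ≠ i := (Finset.mem_erase.mp hk).1
    rw [show α k - α i = (α k - α i) + ((0:ℤ):ℝ) by push_cast; ring]
    exact poch_ne_zero_shift (hZ k i hki) 0 _
  have hP2ne : (∏ k ∈ Finset.univ.erase i, poch (α i + 1 - α k) ↑t) ≠ 0 := by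
    refine Finset.prod_ne_zero_iff.mpr fun k hk => ?_
    have hik : i ≠ k := fun h => (Finset.mem_erase.mp hk).1 h.symm
    rw [show α i + 1 - α k = (α i - α k) + ((1:ℤ):ℝ) by push_cast; ring]
    exact poch_ne_zero_shift (hZ i k hik) 1 _
  have hP1ne : (∏ k ∈ Finset.univ.erase i, poch (α i + 1 - α k - ↑(n k)) ↑t) ≠ 0 := by
    refine Finset.prod_ne_zero_iff.mpr fun k hk => ?_
    have hik : i ≠ k := fun h => (Finset.mem_erase.mp hk).1 h.symm
    rw [show α i + 1 - α k - ↑(n k) = (α i - α k) + ((1 - (n k : ℤ) :ℤ):ℝ) by push_cast; ring]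
    exact poch_ne_zero_shift (hZ i k hik) _ _
  -- Pochhammer/Gamma conversions
  have hp3 : poch (-↑(n i) + 1) ↑t = (-1)^((t:ℕ)) * (((n i - 1).descFactorial (t:ℕ)) : ℝ) := by
    rw [show -(↑(n i):ℝ) + 1 = -(((n i - 1 : ℕ)):ℝ) by rw [Nat.cast_sub (hn i)]; push_cast; ring]
    exact poch_neg_nat _ _
  have hpA : poch (α i + β + ↑N) ↑t
      = Real.Gamma (α i + ↑↑t + β + ↑N) / Real.Gamma (α i + β + ↑N) := by
    have h := Gamma_add_nat (by linarith : (0:ℝ) < α i + β + ↑N) (t:ℕ)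
    rw [show α i + β + ↑N + ((t:ℕ):ℝ) = α i + ↑↑t + β + ↑N by ring] at h
    rw [h]
    field_simp
  have hpB : poch (α i + 1) ↑t
      = Real.Gamma (α i + ↑↑t + 1) / Real.Gamma (α i + 1) := by
    have h := Gamma_add_nat (by linarith : (0:ℝ) < α i + 1) (t:ℕ)
    rw [show α i + 1 + ((t:ℕ):ℝ) = α i + ↑↑t + 1 by ring] at h
    rw [h]
    field_simp
  have hpj : poch (α i + ↑↑t + 1) j
      = Real.Gamma (α i + ↑j + ↑↑t + 1) / Real.Gamma (α i + ↑↑t + 1) := by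
    have h := Gamma_add_nat (by linarith : (0:ℝ) < α i + ↑↑t + 1) j
    rw [show α i + ↑↑t + 1 + (j:ℝ) = α i + ↑j + ↑↑t + 1 by ring] at h
    rw [h]
    field_simp
  have hpN : poch (α i + ↑↑t + β + ↑j + 2) (N - 1 - j)
      = (α i + ↑↑t + β + ↑N) * Real.Gamma (α i + ↑↑t + β + ↑N)
          / Real.Gamma (α i + ↑j + ↑↑t + β + 2) := by
    have h := Gamma_add_nat (by linarith : (0:ℝ) < α i + ↑↑t + β + ↑j + 2) (N - 1 - j)
    rw [show ((N - 1 - j : ℕ) : ℝ) = (N:ℝ) - 1 - j by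
        rw [Nat.cast_sub (by omega : j ≤ N - 1), Nat.cast_sub (by omega : 1 ≤ N)]; push_cast; ring]
      at h
    rw [show α i + ↑↑t + β + ↑j + 2 + ((N:ℝ) - 1 - j) = (α i + ↑↑t + β + ↑N) + 1 by ring,
      Real.Gamma_add_one (ne_of_gt hyne)] at h
    rw [show Real.Gamma (α i + ↑j + ↑↑t + β + 2) = Real.Gamma (α i + ↑↑t + β + ↑j + 2) by
        congr 1; ring] at *
    have hGx : 0 < Real.Gamma (α i + ↑↑t + β + ↑j + 2) := Real.Gamma_pos_of_pos (by linarith)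
    rw [eq_div_iff (ne_of_gt hGx)]
    linarith [h]
  -- the Fin-erase product
  have hPT : (∏ s ∈ Finset.univ.erase t, (α i + ↑↑t - (α i + ↑↑s)))
      = (-1)^(n i - 1 - (t:ℕ)) * (((t:ℕ)).factorial : ℝ) * ((n i - 1 - (t:ℕ)).factorial : ℝ) := by
    rw [prod_erase_eq_prod_ite]
    rw [show (∏ s : Fin (n i), (if s = t then 1 else α i + ↑↑t - (α i + ↑↑s)))
        = ∏ s : Fin (n i), (fun m : ℕ => if m = (t:ℕ) then 1 else ((t:ℕ):ℝ) - m) ↑s by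
      refine Finset.prod_congr rfl fun s _ => ?_
      dsimp only
      by_cases hst : s = t
      · rw [if_pos hst, if_pos (by rw [hst])]
      · rw [if_neg hst, if_neg (fun hc => hst (Fin.ext hc))]; ring]
    rw [Fin.prod_univ_eq_prod_range (fun m : ℕ => if m = (t:ℕ) then 1 else ((t:ℕ):ℝ) - m) (n i)]
    exact L_P1 (n i) (t:ℕ) hl
  -- the cross product over k ≠ i
  have hR1agg : (∏ k ∈ Finset.univ.erase i, ∏ s : Fin (n k), (α i + ↑↑t - (α k + ↑↑s)))
        * (∏ k ∈ Finset.univ.erase i, poch (α i + 1 - α k - ↑(n k)) ↑t)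
      = (-1)^(N - n i) * ((∏ k ∈ Finset.univ.erase i, poch (α k - α i) (n k))
        * (∏ k ∈ Finset.univ.erase i, poch (α i + 1 - α k) ↑t)) := by
    rw [← Finset.prod_mul_distrib]
    have per : ∀ k ∈ Finset.univ.erase i,
        (∏ s : Fin (n k), (α i + ↑↑t - (α k + ↑↑s))) * poch (α i + 1 - α k - ↑(n k)) ↑t
          = (-1)^(n k) * (poch (α k - α i) (n k) * poch (α i + 1 - α k) ↑t) := by
      intro k _
      have h0 : (∏ s : Fin (n k), (α i + ↑↑t - (α k + ↑↑s)))
          = ∏ s ∈ Finset.range (n k), ((α i - α k) + ((t:ℕ):ℝ) - s) := by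
        rw [← Fin.prod_univ_eq_prod_range (fun s : ℕ => (α i - α k) + ((t:ℕ):ℝ) - s)]
        exact Finset.prod_congr rfl fun s _ => by ring
      rw [h0, show α i + 1 - α k - ↑(n k) = (α i - α k) + 1 - ↑(n k) by ring, L_R1,
        show -(α i - α k) = α k - α i by ring, show (α i - α k) + 1 = α i + 1 - α k by ring]
      try ring
    rw [Finset.prod_congr rfl per, Finset.prod_mul_distrib, Finset.prod_mul_distrib,
      Finset.prod_pow_eq_pow_sum]
    have hsum : ∑ k ∈ Finset.univ.erase i, n k = N - n i := by
      have := Finset.sum_erase_add Finset.univ n (Finset.mem_univ i)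
      omega
    rw [hsum]
    try ring
  have hPQne : (∏ k ∈ Finset.univ.erase i, ∏ s : Fin (n k), (α i + ↑↑t - (α k + ↑↑s))) ≠ 0 := by
    refine Finset.prod_ne_zero_iff.mpr fun k hk => Finset.prod_ne_zero_iff.mpr fun s _ => ?_
    have hik : i ≠ k := fun h => (Finset.mem_erase.mp hk).1 h.symm
    intro hc
    exact hZ i k hik ((s:ℕ) - (t:ℕ) : ℤ) (by push_cast; linarith [hc])
  have hPQeq : (∏ k ∈ Finset.univ.erase i, ∏ s : Fin (n k), (α i + ↑↑t - (α k + ↑↑s)))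
      = (-1)^(N - n i) * ((∏ k ∈ Finset.univ.erase i, poch (α k - α i) (n k))
        * (∏ k ∈ Finset.univ.erase i, poch (α i + 1 - α k) ↑t))
        / (∏ k ∈ Finset.univ.erase i, poch (α i + 1 - α k - ↑(n k)) ↑t) := by
    rw [eq_div_iff hP1ne]
    exact hR1agg
  have hniN : n i ≤ N := Finset.single_le_sum (fun k _ => Nat.zero_le (n k)) (Finset.mem_univ i)
  have h1n : 1 ≤ n i := hn i
  have hsgn : ((-1:ℝ))^(n i - 1 - (t:ℕ)) * (-1)^(N - n i) = (-1)^(N - 1) * (-1)^((t:ℕ)) := by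
    rw [← pow_add, ← pow_add]
    rcases Nat.even_or_odd ((n i - 1 - (t:ℕ)) + (N - n i)) with h | h
    · have h1 := Nat.even_iff.mp h
      have h2 : Even ((N - 1) + (t:ℕ)) := Nat.even_iff.mpr (by omega)
      rw [h.neg_one_pow, h2.neg_one_pow]
    · have h1 := Nat.odd_iff.mp h
      have h2 : Odd ((N - 1) + (t:ℕ)) := Nat.odd_iff.mpr (by omega)
      rw [h.neg_one_pow, h2.neg_one_pow]
  rw [hp3, hpA, hpB, hpj, hpN, hPT, hPQeq,
    show α i + ↑↑t - -(β + (N:ℝ)) = α i + ↑↑t + β + ↑N by ring, ← hfacmul]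
  have hs12 : (((-1:ℝ)) ^ (N - 1) * (-1) ^ ((t:ℕ))) * ((-1) ^ (N - 1) * (-1) ^ ((t:ℕ))) = 1 := by
    rw [mul_mul_mul_comm, ← pow_add, ← pow_add]
    have e1 : ((-1:ℝ))^(N-1+(N-1)) = 1 := Even.neg_one_pow ⟨N-1, rfl⟩
    have e2 : ((-1:ℝ))^((t:ℕ)+(t:ℕ)) = 1 := Even.neg_one_pow ⟨(t:ℕ), rfl⟩
    rw [e1, e2]
    norm_num
  have hne : ((-1:ℝ)) ≠ 0 := by norm_num
  exact endgame_id _ _ _ _ _ _ _ _ _ _ _ _ _ _ _ _ _ _ _ _ hsgn hs12 hPKne hP1ne hP2ne hLf hRf hDf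
    (ne_of_gt hG1) (ne_of_gt hG2) (ne_of_gt hG3) (ne_of_gt hG5) (ne_of_gt hG6) (ne_of_gt hG8)
    (ne_of_gt hyne) (pow_ne_zero _ hne) (pow_ne_zero _ hne) (pow_ne_zero _ hne) (pow_ne_zero _ hne)

lemma L_e (c : ℝ) (m : ℕ) : ∏ s ∈ Finset.range m, (-c - s) = (-1)^m * poch c m := by
  rw [show ((-1:ℝ))^m * poch c m = ∏ s ∈ Finset.range m, ((-1) * (c + s)) by
    rw [Finset.prod_mul_distrib, Finset.prod_const, Finset.card_range]; rfl]
  exact Finset.prod_congr rfl fun s _ => by ring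

lemma key_algebra (p : ℕ) (hp : 2 ≤ p) (α : Fin p → ℝ) (β : ℝ)
    (hα : ∀ k, -1 < α k) (hβ : -1 < β)
    (hZ : ∀ k k', k ≠ k' → ∀ z : ℤ, α k - α k' ≠ (z : ℝ))
    (n : Fin p → ℕ) (hn : ∀ k, 1 ≤ n k) (j : ℕ) (hj : j + 1 ≤ ∑ k, n k) :
    ∑ i, Acoef p α β n i * ∑ l ∈ Finset.range (n i), ccoef p α β n i l *
        (Real.Gamma (α i + j + l + 1) * Real.Gamma (β + 1) /
          Real.Gamma (α i + j + l + β + 2))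
      = if j + 1 = ∑ k, n k then 1 else 0 := by
  classical
  set N : ℕ := ∑ k, n k with hN
  have hNp : (p : ℕ) ≤ N := by
    calc (p:ℕ) = ∑ _k : Fin p, 1 := by simp
    _ ≤ N := Finset.sum_le_sum fun k _ => hn k
  have hN2 : 2 ≤ N := le_trans hp hNp
  have hNR : (2:ℝ) ≤ (N:ℝ) := by exact_mod_cast hN2
  -- the node family
  set v : ((Σ k : Fin p, Fin (n k)) ⊕ Unit) → ℝ :=
    Sum.elim (fun u => α u.1 + (u.2 : ℕ)) (fun _ => -(β + (N:ℕ))) with hv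
  have hvinj : Function.Injective v := by
    rintro (⟨k, s⟩ | ⟨⟩) (⟨k', s'⟩ | ⟨⟩) h
    · simp only [hv, Sum.elim_inl] at h
      by_cases hkk : k = k'
      · subst hkk
        have : ((s : ℕ) : ℝ) = ((s' : ℕ) : ℝ) := by linarith [h]
        have : (s : ℕ) = (s' : ℕ) := by exact_mod_cast this
        simp [Fin.ext_iff, this]
      · exact absurd (by push_cast; linarith [h] : α k - α k' = (((s' : ℕ) : ℤ) - (s : ℕ) : ℤ))
          (hZ k k' hkk _)
    · exfalso
      simp only [hv, Sum.elim_inl, Sum.elim_inr] at h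
      have h1 : (-1:ℝ) < α k := hα k
      have h2 : (0:ℝ) ≤ ((s : ℕ) : ℝ) := Nat.cast_nonneg _
      linarith [h]
    · exfalso
      simp only [hv, Sum.elim_inl, Sum.elim_inr] at h
      have h1 : (-1:ℝ) < α k' := hα k'
      have h2 : (0:ℝ) ≤ ((s' : ℕ) : ℝ) := Nat.cast_nonneg _
      linarith [h]
    · rfl
  -- the polynomial
  set f : Polynomial ℝ :=
    (∏ s ∈ Finset.range j, (X + C ((s:ℝ)+1))) *
      ∏ s ∈ Finset.range (N-1-j), (X + C (β + j + 2 + s)) with hf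
  have hmonic : f.Monic := by
    refine (Polynomial.monic_prod_of_monic _ _ fun s _ => Polynomial.monic_X_add_C _).mul
      (Polynomial.monic_prod_of_monic _ _ fun s _ => Polynomial.monic_X_add_C _)
  have hnatdeg : f.natDegree = N - 1 := by
    rw [hf, Polynomial.natDegree_mul
        (Polynomial.monic_prod_of_monic _ _ fun s _ => Polynomial.monic_X_add_C _).ne_zero
        (Polynomial.monic_prod_of_monic _ _ fun s _ => Polynomial.monic_X_add_C _).ne_zero,
      Polynomial.natDegree_prod_of_monic _ _ (fun s _ => Polynomial.monic_X_add_C _),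
      Polynomial.natDegree_prod_of_monic _ _ (fun s _ => Polynomial.monic_X_add_C _)]
    simp only [Polynomial.natDegree_X_add_C]
    rw [Finset.sum_const, Finset.sum_const, Finset.card_range, Finset.card_range]
    simp only [smul_eq_mul, mul_one]
    omega
  have hfeval : ∀ y : ℝ, f.eval y = poch (y+1) j * poch (y + β + j + 2) (N - 1 - j) := by
    intro y
    rw [hf, Polynomial.eval_mul, Polynomial.eval_prod, Polynomial.eval_prod, poch, poch]
    congr 1
    · exact Finset.prod_congr rfl fun s _ => by simp; ring
    · exact Finset.prod_congr rfl fun s _ => by simp; ring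
  have hcard : Fintype.card ((Σ k : Fin p, Fin (n k)) ⊕ Unit) = N + 1 := by
    simp [Fintype.card_sigma]
    exact hN.symm
  have hdeg : f.degree < Fintype.card ((Σ k : Fin p, Fin (n k)) ⊕ Unit) := by
    rw [hcard]
    refine lt_of_le_of_lt Polynomial.degree_le_natDegree ?_
    rw [hnatdeg]
    exact_mod_cast (by omega : N - 1 < N + 1)
  have hlag := lagrange_sum v hvinj f hdeg
  rw [hcard] at hlag
  have hcoe : f.coeff ((N+1) - 1) = 0 := by
    refine Polynomial.coeff_eq_zero_of_natDegree_lt ?_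
    rw [hnatdeg]; omega
  rw [hcoe, Fintype.sum_sum_type] at hlag
  set K : ℝ := ∏ k, poch (α k + β + (N:ℕ)) (n k) with hK
  have hKpos : 0 < K :=
    Finset.prod_pos fun k _ => poch_pos (by have := hα k; push_cast; linarith) _
  have hGβN : 0 < Real.Gamma (β + (N:ℕ)) := Real.Gamma_pos_of_pos (by linarith)
  -- the inr denominator
  have hDe : ∏ w ∈ Finset.univ.erase (Sum.inr ()),
      (v (Sum.inr ()) - v w) = (-1)^N * K := by
    rw [erase_inr_prod]
    rw [show (Finset.univ : Finset (Σ k : Fin p, Fin (n k)))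
        = Finset.univ.sigma (fun _ => Finset.univ) from (Finset.univ_sigma_univ).symm,
      Finset.prod_sigma]
    have hper : ∀ k : Fin p, ∏ s : Fin (n k), (v (Sum.inr ()) - v (Sum.inl ⟨k, s⟩))
        = (-1)^(n k) * poch (α k + β + (N:ℕ)) (n k) := by
      intro k
      rw [show (∏ s : Fin (n k), (v (Sum.inr ()) - v (Sum.inl ⟨k, s⟩)))
          = ∏ s ∈ Finset.range (n k), (-(α k + β + (N:ℕ)) - (s:ℝ)) by
        rw [← Fin.prod_univ_eq_prod_range (fun s : ℕ => (-(α k + β + (N:ℕ)) - (s:ℝ)))]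
        exact Finset.prod_congr rfl fun s _ => by simp [hv]; ring]
      exact L_e _ _
    calc ∏ k : Fin p, ∏ s : Fin (n k), (v (Sum.inr ()) - v (Sum.inl ⟨k, s⟩))
        = ∏ k : Fin p, ((-1:ℝ))^(n k) * poch (α k + β + (N:ℕ)) (n k) :=
          Finset.prod_congr rfl fun k _ => hper k
      _ = (-1)^N * K := by
          rw [Finset.prod_mul_distrib, Finset.prod_pow_eq_pow_sum, hK]
  -- the bridge to the orthogonality sum
  have hbridge : ∑ i, Acoef p α β n i * ∑ l ∈ Finset.range (n i), ccoef p α β n i l *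
        (Real.Gamma (α i + j + l + 1) * Real.Gamma (β + 1) /
          Real.Gamma (α i + j + l + β + 2))
      = (Real.Gamma (β + 1) * K / Real.Gamma (β + (N:ℕ))) *
          ∑ u : (Σ k : Fin p, Fin (n k)),
            f.eval (v (Sum.inl u)) / ∏ w ∈ Finset.univ.erase (Sum.inl u), (v (Sum.inl u) - v w) := by
    rw [Finset.mul_sum]
    rw [show (Finset.univ : Finset (Σ k : Fin p, Fin (n k)))
        = Finset.univ.sigma (fun _ => Finset.univ) from (Finset.univ_sigma_univ).symm,
      Finset.sum_sigma]
    refine Finset.sum_congr rfl fun i _ => ?_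
    rw [Finset.mul_sum, ← Fin.sum_univ_eq_sum_range (fun l => Acoef p α β n i *
        (ccoef p α β n i l * (Real.Gamma (α i + j + l + 1) * Real.Gamma (β + 1) /
          Real.Gamma (α i + j + l + β + 2)))) (n i)]
    refine Finset.sum_congr rfl fun t _ => ?_
    have hveq : v (Sum.inl ⟨i, t⟩) = α i + ((t : ℕ) : ℝ) := by simp [hv]
    rw [hveq, hfeval, erase_inl_prod (fun w => (α i + ((t : ℕ) : ℝ)) - v w) ⟨i, t⟩,
      erase_sigma_prod n (fun w => (α i + ((t : ℕ) : ℝ)) - v (Sum.inl w)) i t]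
    have h1 : ∀ s : Fin (n i), (α i + ((t : ℕ) : ℝ)) - v (Sum.inl ⟨i, s⟩)
        = α i + ((t : ℕ) : ℝ) - (α i + ((s : ℕ) : ℝ)) := fun s => by simp [hv]
    have h2 : ∀ (k : Fin p) (s : Fin (n k)), (α i + ((t : ℕ) : ℝ)) - v (Sum.inl ⟨k, s⟩)
        = α i + ((t : ℕ) : ℝ) - (α k + ((s : ℕ) : ℝ)) := fun k s => by simp [hv]
    have h3 : (α i + ((t : ℕ) : ℝ)) - v (Sum.inr ())
        = α i + ((t : ℕ) : ℝ) - -(β + ((N:ℕ) : ℝ)) := by simp [hv]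
    simp only [h1, h2, h3]
    exact term_id p hp α β hα hβ hZ n hn j hj i t
  have h1 : ∑ a₂ : Unit, f.eval (v (Sum.inr a₂)) /
        ∏ w ∈ Finset.univ.erase (Sum.inr a₂), (v (Sum.inr a₂) - v w)
      = f.eval (v (Sum.inr ())) / ((-1)^N * K) := by
    simp only [Finset.univ_unique, Finset.sum_singleton]
    rw [show (default : Unit) = () from rfl, hDe]
  have hσ : ∑ u : (Σ k : Fin p, Fin (n k)), f.eval (v (Sum.inl u)) /
        ∏ w ∈ Finset.univ.erase (Sum.inl u), (v (Sum.inl u) - v w)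
      = - (f.eval (v (Sum.inr ())) / ((-1)^N * K)) := by
    rw [h1] at hlag
    linarith [hlag]
  rw [hbridge, hσ]
  have hevalinr : f.eval (v (Sum.inr ()))
      = poch (-(β+((N:ℕ):ℝ))+1) j * poch (-(β+((N:ℕ):ℝ)) + β + j + 2) (N-1-j) := by
    rw [show v (Sum.inr ()) = -(β+((N:ℕ):ℝ)) by simp [hv], hfeval]
  by_cases hcase : j + 1 = N
  · rw [if_pos hcase]
    have hNj : (N:ℝ) = (j:ℝ) + 1 := by rw [← hcase]; push_cast; ring
    have hpoch1 : poch (-(β+((N:ℕ):ℝ))+1) j = (-1)^j * poch (β+1) j := by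
      have h := poch_reflect (β+1) j
      rw [show (1:ℝ) - (β+1) - j = -(β+((N:ℕ):ℝ))+1 by rw [hNj]; ring] at h
      exact h
    have hGN : Real.Gamma (β + ((N:ℕ):ℝ)) = poch (β+1) j * Real.Gamma (β+1) := by
      have h := Gamma_add_nat (by linarith : (0:ℝ) < β + 1) j
      rw [show β + 1 + (j:ℝ) = β + ((N:ℕ):ℝ) by rw [hNj]; ring] at h
      exact h
    rw [hevalinr, hpoch1, show N - 1 - j = 0 by omega, poch_zero, hGN,
      show ((-1:ℝ))^N = -((-1:ℝ))^j by rw [← hcase, pow_succ]; ring]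
    have hpj : 0 < poch (β+1) j := poch_pos (by linarith) j
    have hG1 : 0 < Real.Gamma (β+1) := Real.Gamma_pos_of_pos (by linarith)
    have hsj : ((-1:ℝ))^j ≠ 0 := pow_ne_zero _ (by norm_num)
    field_simp
  · rw [if_neg hcase]
    have hzero : poch (-(β+((N:ℕ):ℝ)) + β + j + 2) (N-1-j) = 0 := by
      refine Finset.prod_eq_zero (Finset.mem_range.mpr (by omega : N-2-j < N-1-j)) ?_
      rw [Nat.cast_sub (by omega : j ≤ N - 2), Nat.cast_sub (by omega : 2 ≤ N)]
      push_cast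
      ring
    rw [hevalinr, hzero]
    simp

/-- Type I Jacobi–Piñeiro orthogonality for a general number `p ≥ 2` of weights. -/
theorem jacobiPineiro_typeI_orthogonality (p : ℕ) (hp : 2 ≤ p) (α : Fin p → ℝ) (β : ℝ)
    (hα : ∀ k, -1 < α k) (hβ : -1 < β)
    (hZ : ∀ k k', k ≠ k' → ∀ z : ℤ, α k - α k' ≠ (z : ℝ))
    (n : Fin p → ℕ) (hn : ∀ k, 1 ≤ n k) :
    (∀ j : ℕ, j + 2 ≤ ∑ k, n k →
      ∑ i, ∫ x in (0:ℝ)..1, x ^ j * JP p α β n i x * (x ^ α i * (1 - x) ^ β) = 0)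
    ∧ ∑ i, ∫ x in (0:ℝ)..1,
        x ^ ((∑ k, n k) - 1) * JP p α β n i x * (x ^ α i * (1 - x) ^ β) = 1 := by
  classical
  have hNp : (p : ℕ) ≤ ∑ k, n k := by
    calc (p:ℕ) = ∑ _k : Fin p, 1 := by simp
    _ ≤ ∑ k, n k := Finset.sum_le_sum fun k _ => hn k
  have hN2 : 2 ≤ ∑ k, n k := le_trans hp hNp
  have main : ∀ j : ℕ, j + 1 ≤ ∑ k, n k →
      ∑ i, ∫ x in (0:ℝ)..1, x ^ j * JP p α β n i x * (x ^ α i * (1 - x) ^ β)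
        = if j + 1 = ∑ k, n k then 1 else 0 := by
    intro j hj
    have hint : ∀ i : Fin p,
        (∫ x in (0:ℝ)..1, x ^ j * JP p α β n i x * (x ^ α i * (1 - x) ^ β))
          = Acoef p α β n i * ∑ l ∈ Finset.range (n i), ccoef p α β n i l *
              (Real.Gamma (α i + j + l + 1) * Real.Gamma (β + 1) /
               Real.Gamma (α i + j + l + β + 2)) := by
      intro i
      have hexp : ∀ x : ℝ, x ^ j * JP p α β n i x * (x ^ α i * (1 - x) ^ β)
          = ∑ l ∈ Finset.range (n i), (Acoef p α β n i * ccoef p α β n i l) *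
              (x ^ (j+l) * (x ^ α i * (1 - x) ^ β)) := by
        intro x
        rw [JP_eq, Finset.mul_sum, Finset.mul_sum, Finset.sum_mul]
        refine Finset.sum_congr rfl fun l _ => ?_
        rw [pow_add]
        ring
      rw [intervalIntegral.integral_congr (g := fun x =>
          ∑ l ∈ Finset.range (n i), (Acoef p α β n i * ccoef p α β n i l) *
            (x ^ (j+l) * (x ^ α i * (1 - x) ^ β))) (fun x _ => hexp x)]
      rw [intervalIntegral.integral_finset_sum
        (fun l _ => (mono_integrable (hα i) hβ (j+l)).const_mul _)]
      rw [Finset.mul_sum]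
      refine Finset.sum_congr rfl fun l _ => ?_
      rw [intervalIntegral.integral_const_mul, mono_integral (hα i) hβ (j+l)]
      push_cast
      rw [show α i + ((j:ℝ) + l) + 1 = α i + j + l + 1 by ring,
        show α i + ((j:ℝ) + l) + β + 2 = α i + j + l + β + 2 by ring]
      ring
    rw [Finset.sum_congr rfl (fun i _ => hint i)]
    exact key_algebra p hp α β hα hβ hZ n hn j hj
  constructor
  · intro j hj2
    rw [main j (by omega), if_neg (by omega)]
  · have h := main ((∑ k, n k) - 1) (by omega)
    rwa [if_pos (by omega)] at h
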